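/- arXiv:1304.0069 — 3 statements merged into one kernel-verified Lean document; each statement's English description precedes it below -/
import Mathlib

section
/- Let λ ∈ [0,1) and define Q(t) = 1/(λ + (1-λ)·exp(t)) for t ≥ 0. Then Q satisfies the renewal-type integral equation Q(t) = exp(-t) + λ·∫₀ᵗ Q(t-u)²·exp(-u) du for all t ≥ 0. -/
/-!
With `Q s = 1 / (λ + (1 - λ) eˢ)`, the integrand is a multiple of a derivative:
`d/du Q(t - u) = (1 - λ) eᵗ · Q(t - u)² e⁻ᵘ`. Hence the integral equals
`(Q 0 - Q t) / ((1 - λ) eᵗ) = (1 - Q t) / ((1 - λ) eᵗ)`, and the equation reduces to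
`Q t · (λ + (1 - λ) eᵗ) = 1`.
-/

open Real

lemma add_mul_exp_pos {a b : ℝ} (ha : 0 ≤ a) (hb : 0 < b) (s : ℝ) : 0 < a + b * exp s := by
  positivity

lemma hasDerivAt_one_div_add_mul_exp_sub {a b : ℝ} (t u : ℝ) (h : a + b * exp (t - u) ≠ 0) :
    HasDerivAt (fun u => 1 / (a + b * exp (t - u)))
      (b * exp t * ((1 / (a + b * exp (t - u))) ^ 2 * exp (-u))) u := by
  have hden : HasDerivAt (fun u => a + b * exp (t - u)) (-(b * exp (t - u))) u := by
    simpa using (((hasDerivAt_id u).const_sub t).exp.const_mul b).const_add a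
  simp only [one_div]
  refine (hden.fun_inv h).congr_deriv ?_
  rw [exp_sub, exp_neg]
  field_simp

lemma mul_integral_sq_one_div_add_mul_exp_sub {a b : ℝ} (ha : 0 ≤ a) (hb : 0 < b) (t : ℝ) :
    b * exp t * ∫ u in (0 : ℝ)..t, (1 / (a + b * exp (t - u))) ^ 2 * exp (-u)
      = 1 / (a + b) - 1 / (a + b * exp t) := by
  have hderiv u := hasDerivAt_one_div_add_mul_exp_sub (a := a) t u (add_mul_exp_pos ha hb _).ne'
  have hcont : Continuous fun u => b * exp t * ((1 / (a + b * exp (t - u))) ^ 2 * exp (-u)) := by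
    have := fun u => (add_mul_exp_pos ha hb (t - u)).ne'
    fun_prop (disch := assumption)
  rw [← intervalIntegral.integral_const_mul,
    intervalIntegral.integral_eq_sub_of_hasDerivAt (fun u _ => hderiv u)
      (hcont.intervalIntegrable 0 t)]
  simp

/-- Q(t) = 1/(λ + (1-λ)e^t) satisfies the renewal-type equation
Q(t) = e^{-t} + λ ∫₀ᵗ Q(t-u)² e^{-u} du for t ≥ 0, λ ∈ [0,1). -/
theorem stmt1 (l : ℝ) (hl : l ∈ Set.Ico (0:ℝ) 1) :
    ∀ t ≥ (0:ℝ),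
      1 / (l + (1 - l) * Real.exp t)
        = Real.exp (-t)
          + l * ∫ u in (0:ℝ)..t,
              (1 / (l + (1 - l) * Real.exp (t - u)))^2 * Real.exp (-u) := by
  obtain ⟨hl0, hl1⟩ := hl
  intro t _
  have hb : 0 < 1 - l := by linarith
  have hint := mul_integral_sq_one_div_add_mul_exp_sub hl0 hb t
  rw [add_sub_cancel, div_one] at hint
  have hden := add_mul_exp_pos hl0 hb t
  rw [eq_div_of_mul_eq (mul_pos hb (exp_pos t)).ne' ((mul_comm _ _).trans hint), exp_neg]
  field_simp
  ring
end

section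
/- If g(s) = 1 - √(1-s) for s ∈ [0,1), then the coefficients of the power series expansion of g around 0 are nonnegative and sum to 1, i.e., g is a probability generating function of a distribution on the positive integers with P(W = k) = binom(2k-2, k-1)/(k·2^(2k-1)). -/
/-!
Writing `P(W = k + 1) = catalan k / (2 * 4 ^ k)`, the generating function is
`A(s) = (s / 2) * C(s / 4)` with `C(x) = ∑ catalan n * x ^ n`. The Catalan recurrence gives
`C(x) ^ 2 * x + 1 = C(x)`, hence `(1 - A(s)) ^ 2 = 1 - s`; the telescoping partial sums
`∑_{k < n} P(W = k + 1) = 1 - centralBinom n / 4 ^ n ≤ 1` give `A(s) ≤ 1`, which selects the root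
`A(s) = 1 - √(1 - s)`. By Abel's theorem the total mass is `lim_{s → 1⁻} A(s) = 1`.
-/

open Finset Filter Topology

lemma choose_div_eq_catalan_div (k : ℕ) :
    (Nat.choose (2 * (k + 1) - 2) k : ℝ) / ((k + 1) * 2 ^ (2 * (k + 1) - 1)) =
      catalan k / (2 * 4 ^ k) := by
  have hchoose : (Nat.choose (2 * (k + 1) - 2) k : ℝ) = (k + 1) * catalan k := by
    rw [show 2 * (k + 1) - 2 = 2 * k by omega, ← Nat.centralBinom_eq_two_mul_choose,
      ← succ_mul_catalan_eq_centralBinom]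
    push_cast; ring
  rw [hchoose, show 2 * (k + 1) - 1 = 2 * k + 1 by omega, pow_succ, pow_mul]
  field_simp
  norm_num

lemma catalan_le_four_pow (n : ℕ) : catalan n ≤ 4 ^ n :=
  calc catalan n ≤ (n + 1) * catalan n := Nat.le_mul_of_pos_left _ n.succ_pos
    _ = n.centralBinom := succ_mul_catalan_eq_centralBinom n
    _ ≤ 4 ^ n := Nat.centralBinom_le_four_pow n

lemma sum_range_catalan_div_two_mul_four_pow (n : ℕ) :
    ∑ k ∈ range n, (catalan k : ℝ) / (2 * 4 ^ k) = 1 - n.centralBinom / 4 ^ n := by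
  induction n with
  | zero => simp
  | succ n ih =>
    have hn : (n + 1 : ℝ) ≠ 0 := by positivity
    have hcat : (catalan n : ℝ) = n.centralBinom / (n + 1) := by
      rw [← succ_mul_catalan_eq_centralBinom]; push_cast; field_simp
    have hsucc : ((n + 1).centralBinom : ℝ) = 2 * (2 * n + 1) * n.centralBinom / (n + 1) := by
      rw [eq_div_iff hn, mul_comm]
      exact_mod_cast Nat.succ_mul_centralBinom_succ n
    rw [sum_range_succ, ih, hcat, hsucc, pow_succ]
    field_simp
    ring

theorem tsum_catalan_mul_pow_sq_mul_add_one {R : Type*} [NormedCommRing R] [CompleteSpace R]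
    {x : R} (hx : Summable fun n ↦ ‖(catalan n : R) * x ^ n‖) :
    (∑' n, (catalan n : R) * x ^ n) ^ 2 * x + 1 = ∑' n, (catalan n : R) * x ^ n := by
  have hcauchy (n : ℕ) : ∑ ij ∈ antidiagonal n, (catalan ij.1 : R) * x ^ ij.1 *
      ((catalan ij.2 : R) * x ^ ij.2) = (catalan (n + 1) : R) * x ^ n := by
    rw [catalan_succ', Nat.cast_sum, sum_mul]
    refine sum_congr rfl fun ij hij ↦ ?_
    rw [← mem_antidiagonal.mp hij, pow_add]
    push_cast
    ring
  have hsq : (∑' n, (catalan n : R) * x ^ n) ^ 2 = ∑' n, (catalan (n + 1) : R) * x ^ n := by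
    rw [sq, tsum_mul_tsum_eq_tsum_sum_antidiagonal_of_summable_norm hx hx]
    exact tsum_congr hcauchy
  have hsucc : Summable fun n ↦ (catalan (n + 1) : R) * x ^ n :=
    (summable_norm_sum_mul_antidiagonal_of_summable_norm hx hx).of_norm.congr hcauchy
  rw [hsq, ← hsucc.tsum_mul_right, hx.of_norm.tsum_eq_zero_add]
  simp [pow_succ, mul_assoc, add_comm]

theorem hasSum_catalan_div_two_mul_four_pow_mul_pow_succ {s : ℝ} (hs₀ : 0 ≤ s) (hs₁ : s < 1) :
    HasSum (fun k ↦ (catalan k : ℝ) / (2 * 4 ^ k) * s ^ (k + 1)) (1 - √(1 - s)) := by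
  set C := ∑' n, (catalan n : ℝ) * (s / 4) ^ n
  have hsum : Summable fun n ↦ ‖(catalan n : ℝ) * (s / 4) ^ n‖ := by
    refine (summable_geometric_of_lt_one hs₀ hs₁).of_nonneg_of_le (fun n ↦ norm_nonneg _)
      fun n ↦ ?_
    rw [Real.norm_of_nonneg (by positivity), div_pow, mul_div, div_le_iff₀ (by positivity),
      mul_comm]
    gcongr
    exact_mod_cast catalan_le_four_pow n
  have hA : HasSum (fun k ↦ (catalan k : ℝ) / (2 * 4 ^ k) * s ^ (k + 1)) (s / 2 * C) := by
    refine (hsum.of_norm.hasSum.mul_left (s / 2)).congr_fun fun k ↦ ?_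
    rw [div_pow, pow_succ]
    field_simp
  have hA_le : s / 2 * C ≤ 1 := by
    rw [← hA.tsum_eq]
    refine Real.tsum_le_of_sum_range_le (fun k ↦ by positivity) fun n ↦ ?_
    calc ∑ k ∈ range n, (catalan k : ℝ) / (2 * 4 ^ k) * s ^ (k + 1)
        ≤ ∑ k ∈ range n, (catalan k : ℝ) / (2 * 4 ^ k) := by
          gcongr with k
          exact mul_le_of_le_one_right (by positivity) (pow_le_one₀ hs₀ hs₁.le)
      _ ≤ 1 := by
          rw [sum_range_catalan_div_two_mul_four_pow]
          exact sub_le_self _ (by positivity)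
  have hsq : (1 - s / 2 * C) ^ 2 = 1 - s := by
    linear_combination s * tsum_catalan_mul_pow_sq_mul_add_one hsum
  rwa [← hsq, Real.sqrt_sq (sub_nonneg.mpr hA_le), sub_sub_cancel]

theorem hasSum_catalan_div_two_mul_four_pow :
    HasSum (fun k ↦ (catalan k : ℝ) / (2 * 4 ^ k)) 1 := by
  have hsum : Summable fun k ↦ (catalan k : ℝ) / (2 * 4 ^ k) :=
    summable_of_sum_range_le (fun k ↦ by positivity) fun n ↦ by
      rw [sum_range_catalan_div_two_mul_four_pow]
      exact sub_le_self _ (by positivity)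
  have habel : Tendsto (fun s ↦ s * ∑' k, (catalan k : ℝ) / (2 * 4 ^ k) * s ^ k) (𝓝[<] 1)
      (𝓝 (∑' k, (catalan k : ℝ) / (2 * 4 ^ k))) := by
    simpa using (tendsto_nhdsWithin_of_tendsto_nhds tendsto_id).mul
      (Real.tendsto_tsum_powerSeries_nhdsWithin_lt hsum.hasSum.tendsto_sum_nat)
  have hsqrt : Tendsto (fun s : ℝ ↦ 1 - √(1 - s)) (𝓝[<] 1) (𝓝 1) :=
    tendsto_nhdsWithin_of_tendsto_nhds <|
      (continuous_const.sub (continuous_const.sub continuous_id).sqrt).tendsto' 1 1 (by simp)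
  have heq : (fun s ↦ s * ∑' k, (catalan k : ℝ) / (2 * 4 ^ k) * s ^ k)
      =ᶠ[𝓝[<] 1] fun s ↦ 1 - √(1 - s) := by
    filter_upwards [Ico_mem_nhdsLT (show (0 : ℝ) < 1 by norm_num)] with s hs
    rw [← (hasSum_catalan_div_two_mul_four_pow_mul_pow_succ hs.1 hs.2).tsum_eq,
      ← tsum_mul_left]
    exact tsum_congr fun k ↦ by ring
  rw [← tendsto_nhds_unique (habel.congr' heq) hsqrt]
  exact hsum.hasSum

/-- The coefficients of g(s) = 1 - √(1-s) are the probabilities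
P(W = k) = C(2k-2, k-1)/(k·2^(2k-1)), k ≥ 1: they are nonnegative, sum to 1,
and their generating function is g on [0,1). -/
theorem stmt3 :
    (∀ k : ℕ, 1 ≤ k →
      0 ≤ (Nat.choose (2*k-2) (k-1) : ℝ) / (k * 2^(2*k-1))) ∧
    (∑' k : ℕ, (Nat.choose (2*(k+1)-2) k : ℝ) / ((k+1) * 2^(2*(k+1)-1)) = 1) ∧
    (∀ s ∈ Set.Ico (0:ℝ) 1,
      ∑' k : ℕ, ((Nat.choose (2*(k+1)-2) k : ℝ) / ((k+1) * 2^(2*(k+1)-1))) * s^(k+1)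
        = 1 - Real.sqrt (1 - s)) := by
  simp only [choose_div_eq_catalan_div]
  refine ⟨fun k _ ↦ by positivity, hasSum_catalan_div_two_mul_four_pow.tsum_eq, ?_⟩
  rintro s ⟨hs₀, hs₁⟩
  exact (hasSum_catalan_div_two_mul_four_pow_mul_pow_succ hs₀ hs₁).tsum_eq
end

section
/- Suppose offspring distributions q_m satisfy Σ k·q_m(k) = 1+η_m with η_m → 0, Σ k(k−1)q_m(k) → σ² ∈ (0,∞), sup_m Σ_{k≥n} k²q_m(k) → 0 as n → ∞, and mutation probabilities π_m → 0. Then the mean number M_m of wild-type offspring of a marked particle satisfies M_m → σ², where μ_m·M_m = Σ_{k≥1} k·Σ_{l≥1} q_m(k+l)·binom(k+l,l)·(1−π_m)^k·π_m^l and μ_m = Σ_{k≥1} q_m(k)(1 − (1−π_m)^k). -/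
/-!
Write `u n = 1 - (1 - p) ^ n` for the probability that a family of size `n` is marked. Summing
the binomial mean identity `∑ j C(n, j) x ^ j (1 - x) ^ (n - j) = n x` (with `x = 1 - p`) over
the family size turns `μ M` into `∑ q n · n · (u n - p)`, while `μ = ∑ q n · u n`. Bernoulli's
inequality and its second-order companion give `n p - n² p² ≤ u n ≤ n p`, so `μ M` and `μ` differ
from `p ∑ n (n - 1) q n` and `p ∑ n q n` by at most the defect `R = ∑ q n · n · (n p - u n)`.
The defect term is at most `p² n₀³ q n` for `n < n₀` and at most `p n² q n` otherwise, so the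
uniform tail bound gives `R / p → 0`; hence `μ M / p → σ²` and `μ / p → 1`.
-/

open Filter Topology Finset

theorem summable_of_tsum_ne_zero {ι α : Type*} [AddCommMonoid α] [TopologicalSpace α]
    {f : ι → α} (h : ∑' i, f i ≠ 0) : Summable f :=
  by_contra fun hf => h (tsum_eq_zero_of_not_summable hf)

theorem tsum_tsum_eq_tsum_sum_antidiagonal_of_nonneg {A : Type*} [AddCommMonoid A]
    [HasAntidiagonal A] {f : A × A → ℝ} (hf : 0 ≤ f)
    (hs : Summable fun n => ∑ kl ∈ antidiagonal n, f kl) :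
    ∑' k, ∑' l, f (k, l) = ∑' n, ∑ kl ∈ antidiagonal n, f kl := by
  let e := HasAntidiagonal.sigmaAntidiagonalEquivProd (A := A)
  have hfiber (n : A) : ∑' kl : antidiagonal n, f (e ⟨n, kl⟩) = ∑ kl ∈ antidiagonal n, f kl :=
    Finset.tsum_subtype _ f
  have hfe : Summable (f ∘ e) :=
    (summable_sigma_of_nonneg fun _ => hf _).2
      ⟨fun _ => .of_finite, by simpa only [← hfiber] using hs⟩
  rw [← (e.summable_iff.1 hfe).tsum_prod, ← e.tsum_eq]
  exact hfe.tsum_sigma.trans (tsum_congr hfiber)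

theorem sum_range_mul_choose_mul_pow_mul_one_sub_pow {R : Type*} [CommRing R] (x : R) (n : ℕ) :
    ∑ ν ∈ range (n + 1), (ν : R) * n.choose ν * x ^ ν * (1 - x) ^ (n - ν) = n * x := by
  simpa [bernsteinPolynomial, Polynomial.eval_finsetSum, mul_assoc]
    using congrArg (Polynomial.eval x) (bernsteinPolynomial.sum_smul (R := R) n)

theorem sum_antidiagonal_succ_mul_choose_mul_pow {R : Type*} [CommRing R] (p : R) (n : ℕ) :
    ∑ kl ∈ antidiagonal n, ((kl.1 + 1 : ℕ) : R) * ((kl.1 + 1) + (kl.2 + 1)).choose (kl.2 + 1)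
        * (1 - p) ^ (kl.1 + 1) * p ^ (kl.2 + 1)
      = (n + 2) * (1 - (1 - p) ^ (n + 2) - p) := by
  have h := sum_range_mul_choose_mul_pow_mul_one_sub_pow (1 - p) (n + 2)
  rw [sub_sub_cancel, sum_range_succ, sum_range_succ'] at h
  rw [Nat.sum_antidiagonal_eq_sum_range_succ_mk]
  have hterm : ∀ k ∈ range (n + 1), ((k + 1 : ℕ) : R) * ((k + 1) + (n - k + 1)).choose (n - k + 1)
      * (1 - p) ^ (k + 1) * p ^ (n - k + 1)
      = ((k + 1 : ℕ) : R) * (n + 2).choose (k + 1) * (1 - p) ^ (k + 1) * p ^ (n + 2 - (k + 1)) := by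
    intro k hk
    have hkn : k ≤ n := Nat.lt_succ_iff.1 (mem_range.1 hk)
    rw [show k + 1 + (n - k + 1) = n + 2 by omega, show n + 2 - (k + 1) = n - k + 1 by omega,
      Nat.choose_symm_of_eq_add (show n + 2 = (n - k + 1) + (k + 1) by omega)]
  rw [sum_congr rfl hterm]
  simp only [Nat.cast_zero, zero_mul, add_zero, Nat.choose_self, Nat.cast_one, mul_one,
    Nat.sub_self, pow_zero] at h
  push_cast at h ⊢
  linear_combination h

theorem one_sub_one_sub_pow_le {p : ℝ} (hp : p ≤ 2) (n : ℕ) : 1 - (1 - p) ^ n ≤ n * p := by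
  have := one_add_mul_le_pow (show -2 ≤ -p by linarith) n
  rw [← sub_eq_add_neg] at this
  linarith

theorem mul_sub_sq_mul_sq_le_one_sub_one_sub_pow {p : ℝ} (hp0 : 0 ≤ p) (hp1 : p ≤ 1) (n : ℕ) :
    n * p - n ^ 2 * p ^ 2 ≤ 1 - (1 - p) ^ n := by
  induction n with
  | zero => simp
  | succ n ih =>
    have hstep : 1 - (1 - p) ^ (n + 1) = p + (1 - p) * (1 - (1 - p) ^ n) := by ring
    have hn : (0 : ℝ) ≤ n := n.cast_nonneg
    rw [hstep]
    push_cast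
    nlinarith [mul_le_mul_of_nonneg_left ih (sub_nonneg.2 hp1),
      mul_nonneg (mul_nonneg hn hn) (pow_nonneg hp0 3)]

theorem one_sub_one_sub_pow_nonneg {p : ℝ} (hp0 : 0 ≤ p) (hp1 : p ≤ 1) (n : ℕ) :
    0 ≤ 1 - (1 - p) ^ n :=
  sub_nonneg.2 (pow_le_one₀ (sub_nonneg.2 hp1) (by linarith))

/-- The paper's `μ_m`, with `p = π_m`. -/
noncomputable def markedProb (q : ℕ → ℝ) (p : ℝ) : ℝ := ∑' k, q k * (1 - (1 - p) ^ k)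

/-- The paper's `μ_m M_m`. -/
noncomputable def markedWildMass (q : ℕ → ℝ) (p : ℝ) : ℝ :=
  ∑' k : ℕ, ∑' l : ℕ, ((k + 1 : ℕ) : ℝ) * q ((k + 1) + (l + 1))
    * ((k + 1) + (l + 1)).choose (l + 1) * (1 - p) ^ (k + 1) * p ^ (l + 1)

noncomputable def markingDefect (q : ℕ → ℝ) (p : ℝ) : ℝ :=
  ∑' n, q n * n * (n * p - (1 - (1 - p) ^ n))

section Estimates

variable {q : ℕ → ℝ} {p : ℝ}

theorem summable_natCast_mul_of_summable_sq_mul (hq : ∀ k, 0 ≤ q k)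
    (hq2 : Summable fun k : ℕ => (k : ℝ) ^ 2 * q k) : Summable fun k : ℕ => (k : ℝ) * q k :=
  hq2.of_nonneg_of_le (fun k => mul_nonneg k.cast_nonneg (hq k)) fun k =>
    mul_le_mul_of_nonneg_right (by exact_mod_cast Nat.le_self_pow two_ne_zero k) (hq k)

theorem summable_markingDefect (hq : ∀ k, 0 ≤ q k) (hp0 : 0 ≤ p) (hp1 : p ≤ 1)
    (hq2 : Summable fun k : ℕ => (k : ℝ) ^ 2 * q k) :
    Summable fun n : ℕ => q n * n * (n * p - (1 - (1 - p) ^ n)) := by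
  refine (hq2.mul_left p).of_nonneg_of_le (fun n => ?_) fun n => ?_
  · exact mul_nonneg (mul_nonneg (hq n) n.cast_nonneg)
      (sub_nonneg.2 (one_sub_one_sub_pow_le (by linarith) n))
  · have := one_sub_one_sub_pow_nonneg hp0 hp1 n
    have := mul_nonneg (hq n) (n.cast_nonneg : (0 : ℝ) ≤ n)
    nlinarith

theorem markedWildMass_eq (hq : ∀ k, 0 ≤ q k) (hp0 : 0 ≤ p) (hp1 : p ≤ 1)
    (hq2 : Summable fun k : ℕ => (k : ℝ) ^ 2 * q k) :
    markedWildMass q p = p * ∑' k : ℕ, (k : ℝ) * (k - 1) * q k - markingDefect q p := by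
  set g : ℕ → ℝ := fun n => q n * n * (1 - (1 - p) ^ n - p)
  have hsV : Summable fun k : ℕ => (k : ℝ) * (k - 1) * q k :=
    (hq2.sub (summable_natCast_mul_of_summable_sq_mul hq hq2)).congr fun k => by ring
  have hsR := summable_markingDefect hq hp0 hp1 hq2
  have hg : Summable g := ((hsV.mul_left p).sub hsR).congr fun n => by ring
  have hanti (n : ℕ) : ∑ kl ∈ antidiagonal n, ((kl.1 + 1 : ℕ) : ℝ) * q ((kl.1 + 1) + (kl.2 + 1))
      * ((kl.1 + 1) + (kl.2 + 1)).choose (kl.2 + 1) * (1 - p) ^ (kl.1 + 1) * p ^ (kl.2 + 1)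
      = g (n + 2) := by
    have hq_out : ∀ kl ∈ antidiagonal n, ((kl.1 + 1 : ℕ) : ℝ) * q ((kl.1 + 1) + (kl.2 + 1))
        * ((kl.1 + 1) + (kl.2 + 1)).choose (kl.2 + 1) * (1 - p) ^ (kl.1 + 1) * p ^ (kl.2 + 1)
        = q (n + 2) * (((kl.1 + 1 : ℕ) : ℝ) * ((kl.1 + 1) + (kl.2 + 1)).choose (kl.2 + 1)
          * (1 - p) ^ (kl.1 + 1) * p ^ (kl.2 + 1)) := by
      intro kl hkl
      rw [HasAntidiagonal.mem_antidiagonal] at hkl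
      rw [show (kl.1 + 1) + (kl.2 + 1) = n + 2 by omega]
      ring
    rw [sum_congr rfl hq_out, ← mul_sum, sum_antidiagonal_succ_mul_choose_mul_pow]
    simp only [g]
    push_cast
    ring
  calc markedWildMass q p = ∑' n, g (n + 2) := by
        refine (tsum_tsum_eq_tsum_sum_antidiagonal_of_nonneg (fun kl => ?_) ?_).trans
          (tsum_congr hanti)
        · have := hq ((kl.1 + 1) + (kl.2 + 1))
          have : 0 ≤ 1 - p := by linarith
          positivity
        · simpa only [hanti] using (summable_nat_add_iff 2).2 hg
    _ = ∑' n, g n := by simp [← hg.sum_add_tsum_nat_add 2, g, sum_range_succ]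
    _ = _ := by
      rw [markingDefect, ← tsum_mul_left, ← hsV.mul_left p |>.tsum_sub hsR]
      exact tsum_congr fun n => by ring

theorem markingDefect_nonneg (hq : ∀ k, 0 ≤ q k) (hp : p ≤ 2) : 0 ≤ markingDefect q p :=
  tsum_nonneg fun n => mul_nonneg (mul_nonneg (hq n) n.cast_nonneg)
    (sub_nonneg.2 (one_sub_one_sub_pow_le hp n))

theorem summable_markedProb (hq : ∀ k, 0 ≤ q k) (hp0 : 0 ≤ p) (hp1 : p ≤ 1)
    (hq1 : Summable fun k : ℕ => (k : ℝ) * q k) :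
    Summable fun k : ℕ => q k * (1 - (1 - p) ^ k) :=
  (hq1.mul_left p).of_nonneg_of_le
    (fun k => mul_nonneg (hq k) (one_sub_one_sub_pow_nonneg hp0 hp1 k)) fun k => by
      nlinarith [mul_le_mul_of_nonneg_left (one_sub_one_sub_pow_le (by linarith) k) (hq k)]

theorem markedProb_le (hq : ∀ k, 0 ≤ q k) (hp0 : 0 ≤ p) (hp1 : p ≤ 1)
    (hq1 : Summable fun k : ℕ => (k : ℝ) * q k) :
    markedProb q p ≤ p * ∑' k : ℕ, (k : ℝ) * q k := by
  rw [markedProb, ← tsum_mul_left]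
  refine Summable.tsum_le_tsum (fun k => ?_) (summable_markedProb hq hp0 hp1 hq1) (hq1.mul_left p)
  nlinarith [mul_le_mul_of_nonneg_left (one_sub_one_sub_pow_le (by linarith) k) (hq k)]

theorem sub_markingDefect_le_markedProb (hq : ∀ k, 0 ≤ q k) (hp0 : 0 ≤ p) (hp1 : p ≤ 1)
    (hq2 : Summable fun k : ℕ => (k : ℝ) ^ 2 * q k) :
    p * ∑' k : ℕ, (k : ℝ) * q k - markingDefect q p ≤ markedProb q p := by
  have hq1 := summable_natCast_mul_of_summable_sq_mul hq hq2
  have hsR := summable_markingDefect hq hp0 hp1 hq2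
  have hterm (k : ℕ) : p * (k * q k) - q k * k * (k * p - (1 - (1 - p) ^ k))
      ≤ q k * (1 - (1 - p) ^ k) := by
    have hd := sub_nonneg.2 (one_sub_one_sub_pow_le (by linarith : p ≤ 2) k)
    rcases k.eq_zero_or_pos with rfl | hk
    · simp
    · have hk : (1 : ℝ) ≤ k := by exact_mod_cast hk
      nlinarith [mul_le_mul_of_nonneg_left hk (mul_nonneg (hq k) hd)]
  rw [markingDefect, ← tsum_mul_left, ← (hq1.mul_left p).tsum_sub hsR]
  exact Summable.tsum_le_tsum hterm ((hq1.mul_left p).sub hsR) (summable_markedProb hq hp0 hp1 hq1)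

theorem markingDefect_le (hq : ∀ k, 0 ≤ q k) (hp0 : 0 ≤ p) (hp1 : p ≤ 1) (hq0 : Summable q)
    (hq2 : Summable fun k : ℕ => (k : ℝ) ^ 2 * q k) (n₀ : ℕ) :
    markingDefect q p
      ≤ p ^ 2 * n₀ ^ 3 * ∑' k, q k + p * ∑' k : ℕ, (if n₀ ≤ k then (k : ℝ) ^ 2 * q k else 0) := by
  have htail : Summable fun k : ℕ => if n₀ ≤ k then (k : ℝ) ^ 2 * q k else 0 :=
    hq2.of_nonneg_of_le (fun k => by split_ifs <;> positivity [hq k])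
      fun k => by split_ifs <;> first | rfl | exact mul_nonneg (sq_nonneg _) (hq k)
  have hterm (k : ℕ) : q k * k * (k * p - (1 - (1 - p) ^ k))
      ≤ p ^ 2 * n₀ ^ 3 * q k + p * (if n₀ ≤ k then (k : ℝ) ^ 2 * q k else 0) := by
    have hqk : 0 ≤ q k * k := mul_nonneg (hq k) k.cast_nonneg
    have hsmall := mul_le_mul_of_nonneg_left
      (by linarith [mul_sub_sq_mul_sq_le_one_sub_one_sub_pow hp0 hp1 k] :
        (k : ℝ) * p - (1 - (1 - p) ^ k) ≤ k ^ 2 * p ^ 2) hqk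
    have hlarge := mul_le_mul_of_nonneg_left
      (by linarith [one_sub_one_sub_pow_nonneg hp0 hp1 k] :
        (k : ℝ) * p - (1 - (1 - p) ^ k) ≤ k * p) hqk
    split_ifs with hk
    · nlinarith [mul_nonneg (mul_nonneg (sq_nonneg p) (pow_nonneg n₀.cast_nonneg 3)) (hq k)]
    · have hk3 : (k : ℝ) ^ 3 ≤ n₀ ^ 3 := by gcongr; exact_mod_cast (not_le.1 hk).le
      nlinarith [mul_le_mul_of_nonneg_left hk3 (mul_nonneg (sq_nonneg p) (hq k))]
  rw [markingDefect, ← tsum_mul_left, ← tsum_mul_left,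
    ← (hq0.mul_left _).tsum_add (htail.mul_left p)]
  exact Summable.tsum_le_tsum hterm (summable_markingDefect hq hp0 hp1 hq2)
    ((hq0.mul_left _).add (htail.mul_left p))

end Estimates

theorem tendsto_markingDefect_div {q : ℕ → ℕ → ℝ} {π : ℕ → ℝ} (hq : ∀ m k, 0 ≤ q m k)
    (h1 : ∀ m, ∑' k : ℕ, q m k = 1) (hπpos : ∀ m, π m ∈ Set.Ioo (0 : ℝ) 1)
    (hπ : Tendsto π atTop (𝓝 0))
    (hui : ∀ δ > (0 : ℝ), ∃ n : ℕ, ∀ m,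
      (∑' k : ℕ, (if n ≤ k then (k : ℝ) ^ 2 * q m k else 0)) ≤ δ)
    (hq2 : ∀ᶠ m in atTop, Summable fun k : ℕ => (k : ℝ) ^ 2 * q m k) :
    Tendsto (fun m => markingDefect (q m) (π m) / π m) atTop (𝓝 0) := by
  rw [Metric.tendsto_nhds]
  intro ε hε
  obtain ⟨n₀, hn₀⟩ := hui (ε / 2) (half_pos hε)
  have hπn₀ : Tendsto (fun m => π m * n₀ ^ 3) atTop (𝓝 0) := by
    simpa using hπ.mul_const ((n₀ : ℝ) ^ 3)
  have hsmall := hπn₀.eventually (gt_mem_nhds (half_pos hε))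
  filter_upwards [hsmall, hq2] with m hm hm2
  obtain ⟨hp0, hp1⟩ := hπpos m
  have hq0 : Summable (q m) := summable_of_tsum_ne_zero (by simp [h1 m])
  have hR := markingDefect_le (hq m) hp0.le hp1.le hq0 hm2 n₀
  rw [h1 m, mul_one] at hR
  rw [Real.dist_eq, sub_zero, abs_of_nonneg (div_nonneg (markingDefect_nonneg (hq m) (by linarith))
    hp0.le), div_lt_iff₀ hp0]
  nlinarith [mul_le_mul_of_nonneg_left (hn₀ m) hp0.le]

/-- In the binomial mutation model the mean number M_m of wild-type offspring
of a marked particle converges to σ². -/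
theorem stmt16 (q : ℕ → ℕ → ℝ) (π : ℕ → ℝ) (η : ℕ → ℝ) (σ : ℝ) (hσ : 0 < σ)
    (hq : ∀ m k, 0 ≤ q m k) (h1 : ∀ m, ∑' k : ℕ, q m k = 1)
    (hπpos : ∀ m, π m ∈ Set.Ioo (0:ℝ) 1)
    (hπ : Tendsto π atTop (nhds 0))
    (hmean : ∀ m, ∑' k : ℕ, (k:ℝ) * q m k = 1 + η m)
    (hη : Tendsto η atTop (nhds 0))
    (hvar : Tendsto (fun m => ∑' k : ℕ, (k:ℝ) * ((k:ℝ) - 1) * q m k)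
      atTop (nhds (σ^2)))
    (hui : ∀ δ > (0:ℝ), ∃ n : ℕ, ∀ m,
      (∑' k : ℕ, (if n ≤ k then (k:ℝ)^2 * q m k else 0)) ≤ δ) :
    Tendsto (fun m =>
        (∑' k : ℕ, ∑' l : ℕ,
            ((k+1 : ℕ):ℝ) * q m ((k+1)+(l+1))
              * (Nat.choose ((k+1)+(l+1)) (l+1) : ℝ)
              * (1 - π m)^(k+1) * (π m)^(l+1))
          / (∑' k : ℕ, q m k * (1 - (1 - π m)^k)))
      atTop (nhds (σ^2)) := by
  have hp0 (m : ℕ) : 0 < π m := (hπpos m).1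
  have hp1 (m : ℕ) : π m ≤ 1 := (hπpos m).2.le
  have hmean' : Tendsto (fun m => ∑' k : ℕ, (k : ℝ) * q m k) atTop (𝓝 1) := by
    simpa [hmean] using hη.const_add 1
  have hq1 : ∀ᶠ m in atTop, Summable fun k : ℕ => (k : ℝ) * q m k :=
    (hmean'.eventually_ne one_ne_zero).mono fun m => summable_of_tsum_ne_zero
  have hqV : ∀ᶠ m in atTop, Summable fun k : ℕ => (k : ℝ) * (k - 1) * q m k :=
    (hvar.eventually_ne (by positivity)).mono fun m => summable_of_tsum_ne_zero
  have hq2 : ∀ᶠ m in atTop, Summable fun k : ℕ => (k : ℝ) ^ 2 * q m k :=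
    (hq1.and hqV).mono fun m h => (h.2.add h.1).congr fun k => by ring
  have hR := tendsto_markingDefect_div hq h1 hπpos hπ hui hq2
  have hD : Tendsto (fun m => markedProb (q m) (π m) / π m) atTop (𝓝 1) := by
    refine tendsto_of_tendsto_of_tendsto_of_le_of_le' (by simpa using hmean'.sub hR) hmean' ?_ ?_
    · filter_upwards [hq2] with m hm
      rw [le_div_iff₀ (hp0 m), sub_mul, div_mul_cancel₀ _ (hp0 m).ne', mul_comm]
      exact sub_markingDefect_le_markedProb (hq m) (hp0 m).le (hp1 m) hm
    · filter_upwards [hq1] with m hm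
      rw [div_le_iff₀ (hp0 m), mul_comm]
      exact markedProb_le (hq m) (hp0 m).le (hp1 m) hm
  have hN : Tendsto (fun m => markedWildMass (q m) (π m) / π m) atTop (𝓝 (σ ^ 2)) := by
    have hlim : Tendsto (fun m => ∑' k : ℕ, (k : ℝ) * (k - 1) * q m k
        - markingDefect (q m) (π m) / π m) atTop (𝓝 (σ ^ 2)) := by
      simpa using hvar.sub hR
    refine hlim.congr' ?_
    filter_upwards [hq2] with m hm
    rw [markedWildMass_eq (hq m) (hp0 m).le (hp1 m) hm, sub_div, mul_div_cancel_left₀ _ (hp0 m).ne']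
  have hratio := hN.div hD one_ne_zero
  rw [div_one] at hratio
  exact hratio.congr fun m => div_div_div_cancel_right₀ (hp0 m).ne' _ _
end
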